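/- The Hamiltonian system on ℂ⁴ with Hamiltonian H = (p₁² + p₂²)/2 + (q₁² + q₂²)·α·(q₁ − i·q₂), α ∈ ℂ, admits the additional first integral F = i·p₁² + 6·p₁·p₂ − 5i·p₂² + 8α·q₂·(q₁ − i·q₂)², i.e., the Poisson bracket {H, F} vanishes identically. -/

import Mathlib

/-!
Once the eight partial derivatives are written out, the Poisson bracket is a polynomial in
`q₁, q₂, p₁, p₂, α` and `i`, and as such it equals `(i² + 1) · α (-4 q₁ q₂ p₁ + (10 q₁² + 6 q₂²) p₂)`;
it therefore vanishes because `i² = -1`.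
-/

open MvPolynomial

/-- Variables: X 0 = q₁, X 1 = q₂, X 2 = p₁, X 3 = p₂. -/
noncomputable def Hpoly (α : ℂ) : MvPolynomial (Fin 4) ℂ :=
  C (1 / 2) * (X 2 ^ 2 + X 3 ^ 2) +
    (X 0 ^ 2 + X 1 ^ 2) * C α * (X 0 - C Complex.I * X 1)

noncomputable def Fpoly (α : ℂ) : MvPolynomial (Fin 4) ℂ :=
  C Complex.I * X 2 ^ 2 + C 6 * X 2 * X 3 - C (5 * Complex.I) * X 3 ^ 2 +
    C (8 * α) * X 1 * (X 0 - C Complex.I * X 1) ^ 2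

theorem C_I_sq {σ : Type*} : (C Complex.I : MvPolynomial σ ℂ) ^ 2 = -1 := by
  rw [← map_pow, Complex.I_sq, map_neg, map_one]

theorem C_inv_two_mul_two {σ : Type*} : (C (2⁻¹ : ℂ) : MvPolynomial σ ℂ) * 2 = 1 := by
  rw [← map_ofNat C 2, ← map_mul, inv_mul_cancel₀ two_ne_zero, map_one]

section Gradients

variable (α : ℂ)

theorem pderiv_q₁_Hpoly :
    pderiv 0 (Hpoly α) = C α * (2 * X 0 * (X 0 - C Complex.I * X 1) + (X 0 ^ 2 + X 1 ^ 2)) := by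
  simp [Hpoly, Derivation.leibniz_pow]; ring

theorem pderiv_q₂_Hpoly : pderiv 1 (Hpoly α) =
    C α * (2 * X 1 * (X 0 - C Complex.I * X 1) - C Complex.I * (X 0 ^ 2 + X 1 ^ 2)) := by
  simp [Hpoly, Derivation.leibniz_pow]; ring

theorem pderiv_p₁_Hpoly : pderiv 2 (Hpoly α) = X 2 := by
  simp [Hpoly, Derivation.leibniz_pow]
  linear_combination X 2 * C_inv_two_mul_two

theorem pderiv_p₂_Hpoly : pderiv 3 (Hpoly α) = X 3 := by
  simp [Hpoly, Derivation.leibniz_pow]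
  linear_combination X 3 * C_inv_two_mul_two

theorem pderiv_q₁_Fpoly :
    pderiv 0 (Fpoly α) = 16 * C α * X 1 * (X 0 - C Complex.I * X 1) := by
  simp [Fpoly, Derivation.leibniz_pow]
  simp only [map_ofNat]; ring

theorem pderiv_q₂_Fpoly : pderiv 1 (Fpoly α) =
    8 * C α * (X 0 - C Complex.I * X 1) * (X 0 - C Complex.I * X 1 - 2 * C Complex.I * X 1) := by
  simp [Fpoly, Derivation.leibniz_pow]
  simp only [map_ofNat]; ring

theorem pderiv_p₁_Fpoly : pderiv 2 (Fpoly α) = 2 * C Complex.I * X 2 + 6 * X 3 := by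
  simp [Fpoly, Derivation.leibniz_pow]
  simp only [map_ofNat]; ring

theorem pderiv_p₂_Fpoly : pderiv 3 (Fpoly α) = 6 * X 2 - 10 * C Complex.I * X 3 := by
  simp [Fpoly, Derivation.leibniz_pow]
  simp only [map_ofNat]; ring

end Gradients

/-- The Poisson bracket {H,F} = ∑ᵢ (∂H/∂qᵢ·∂F/∂pᵢ − ∂H/∂pᵢ·∂F/∂qᵢ) vanishes
identically: F is a first integral of the Hamiltonian system of H. -/
theorem stmt_19 (α : ℂ) :
    pderiv 0 (Hpoly α) * pderiv 2 (Fpoly α) - pderiv 2 (Hpoly α) * pderiv 0 (Fpoly α) +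
      (pderiv 1 (Hpoly α) * pderiv 3 (Fpoly α) - pderiv 3 (Hpoly α) * pderiv 1 (Fpoly α))
      = 0 := by
  rw [pderiv_q₁_Hpoly, pderiv_q₂_Hpoly, pderiv_p₁_Hpoly, pderiv_p₂_Hpoly,
    pderiv_q₁_Fpoly, pderiv_q₂_Fpoly, pderiv_p₁_Fpoly, pderiv_p₂_Fpoly]
  linear_combination C α * (-4 * X 0 * X 1 * X 2 + (10 * X 0 ^ 2 + 6 * X 1 ^ 2) * X 3) * C_I_sq
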